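/- arXiv:1201.2243 — 2 statements merged into one kernel-verified Lean document; each statement's English description precedes it below -/
import Mathlib

section
/- Let p > 1 and let φ : ℝ → ℝ be a twice continuously differentiable, strictly decreasing function with 0 < φ < 1, satisfying φ''(ζ) + (e^{2ζ}/2 − (p+3)/(p−1)) φ'(ζ) + (2(p+1)/(p−1)²) φ(ζ)(1 − φ(ζ)^{p−1}) = 0 on ℝ, with φ(ζ) → 1 as ζ → −∞ and φ(ζ) → 0 as ζ → +∞. Then there exists ε ∈ (0,1) such that 1 − φ(z) + ε φ'(z) ≥ 0 for all z ∈ ℝ. -/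
/-!
Put `J = 1 - φ + ε φ'`. Wherever `J < 0` we have `-φ' > (1 - φ)/ε`, and the profile equation
gives `J' = (1 + ε (e^{2ζ}/2 - c)) (-φ') - ε k φ (1 - φ^{p-1})`, `c` and `k` being the constant
coefficients of the equation. For small `ε` the first term is
at least `(1 - φ)/(2ε)`, while by Bernoulli's inequality the second is `O(ε (1 - φ))`; so `J' > 0`
wherever `J < 0`. Hence if `J (z) < 0`, then `J ≤ J (z)` on all of `(-∞, z]`, which forces
`φ' ≤ J (z)/ε < 0` on that ray, impossible for a function with values in `(0, 1)`.
-/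

open Real Set Filter Topology

theorem le_of_le_of_deriv_pos_at_level {f f' : ℝ → ℝ} (hf : ∀ x, HasDerivAt f (f' x) x)
    {b c : ℝ} (hb : f b ≤ c) (hlevel : ∀ x, f x = c → 0 < f' x) {x : ℝ} (hx : x ≤ b) :
    f x ≤ c := by
  have hg : ∀ t, HasDerivAt (fun t => f (b - t)) (-f' (b - t)) t := fun t =>
    (hf (b - t)).comp_const_sub b t
  have := image_le_of_deriv_right_lt_deriv_boundary (a := 0) (b := b - x)
    (fun t _ => (hg t).continuousAt.continuousWithinAt) (fun t _ => (hg t).hasDerivWithinAt)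
    (B := fun _ => c) (by simpa using hb) (fun _ => hasDerivAt_const _ c)
    (fun t _ ht => neg_neg_iff_pos.mpr (hlevel _ ht)) (x := b - x) ⟨by linarith, le_rfl⟩
  simpa using this

theorem exists_neg_lt_deriv_of_mem_Ioo {φ : ℝ → ℝ} (hφ : Differentiable ℝ φ)
    (hφ01 : ∀ x, φ x ∈ Ioo 0 1) {δ : ℝ} (hδ : 0 < δ) (b : ℝ) : ∃ x < b, -δ < deriv φ x := by
  obtain ⟨x, hx, hslope⟩ := exists_deriv_eq_slope φ (sub_lt_self b (inv_pos.mpr hδ))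
    hφ.continuous.continuousOn hφ.differentiableOn
  refine ⟨x, hx.2, ?_⟩
  have h₁ := hφ01 b
  have h₂ := hφ01 (b - δ⁻¹)
  rw [hslope, sub_sub_cancel, div_inv_eq_mul]
  nlinarith [h₁.1, h₂.2]

theorem one_sub_rpow_le_max_mul {x : ℝ} (hx₀ : 0 < x) (hx₁ : x ≤ 1) (q : ℝ) :
    1 - x ^ q ≤ max 1 q * (1 - x) := by
  rcases le_or_gt q 1 with hq | hq
  · have : x ≤ x ^ q := by
      simpa using Real.rpow_le_rpow_of_exponent_ge hx₀ hx₁ hq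
    nlinarith [le_max_left 1 q]
  · have := one_add_mul_self_le_rpow_one_add (by linarith : (-1 : ℝ) ≤ x - 1) hq.le
    rw [add_sub_cancel] at this
    nlinarith [le_max_right 1 q]

theorem mul_one_sub_rpow_le_max_mul {x : ℝ} (hx₀ : 0 < x) (hx₁ : x ≤ 1) (q : ℝ) :
    x * (1 - x ^ q) ≤ max 1 q * (1 - x) := by
  have hC : 0 ≤ max 1 q * (1 - x) := mul_nonneg (by positivity) (by linarith)
  rcases le_or_gt (1 - x ^ q) 0 with h | h
  · nlinarith
  · nlinarith [one_sub_rpow_le_max_mul hx₀ hx₁ q]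

/-- Pointwise form of `J' > 0 where J < 0`, with `F, D, D₂` standing for `φ, φ', φ''` at a point
and `a` for the coefficient `e^{2ζ}/2`. -/
theorem neg_add_mul_pos_of_profile_eq {q a c k ε F D D₂ : ℝ} (ha : 0 ≤ a) (hk : 0 ≤ k)
    (hε : 0 < ε) (hεc : ε * c < 1 / 2) (hεk : 2 * ε ^ 2 * (k * max 1 q) < 1)
    (hF : F ∈ Ioo 0 1) (hode : D₂ + (a - c) * D + k * F * (1 - F ^ q) = 0)
    (hneg : 1 - F + ε * D < 0) : 0 < -D + ε * D₂ := by
  have hslope : 1 - F < ε * -D := by linarith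
  have hD : 0 < -D := pos_of_mul_pos_right ((sub_pos.mpr hF.2).trans hslope) hε.le
  have hdamp : 1 / 2 ≤ 1 + ε * (a - c) := by nlinarith
  have hreact : ε * (k * (F * (1 - F ^ q))) < -D / 2 :=
    calc ε * (k * (F * (1 - F ^ q))) ≤ ε * (k * (max 1 q * (1 - F))) := by
          gcongr ε * (k * ?_); exact mul_one_sub_rpow_le_max_mul hF.1 hF.2.le q
      _ ≤ ε * (k * (max 1 q * (ε * -D))) := by gcongr
      _ = 2 * ε ^ 2 * (k * max 1 q) * (-D / 2) := by ring
      _ < -D / 2 := mul_lt_of_lt_one_left (by positivity) hεk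
  calc 0 < (1 + ε * (a - c)) * -D - ε * (k * (F * (1 - F ^ q))) := by
        nlinarith [mul_le_mul_of_nonneg_right hdamp hD.le]
    _ = -D + ε * D₂ := by linear_combination (-ε) * hode

theorem eventually_lt_one_and_mul_lt_half_and_sq_mul_lt_one (c M : ℝ) :
    ∀ᶠ ε in 𝓝[>] (0 : ℝ), 0 < ε ∧ ε < 1 ∧ ε * c < 1 / 2 ∧ 2 * ε ^ 2 * M < 1 := by
  have h₁ : ∀ᶠ ε in 𝓝 (0 : ℝ), ε < 1 := eventually_lt_nhds one_pos
  have h₂ : ∀ᶠ ε in 𝓝 (0 : ℝ), ε * c < 1 / 2 :=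
    (by fun_prop : ContinuousAt (fun ε : ℝ => ε * c) 0).eventually_lt continuousAt_const
      (by norm_num)
  have h₃ : ∀ᶠ ε in 𝓝 (0 : ℝ), 2 * ε ^ 2 * M < 1 :=
    (by fun_prop : ContinuousAt (fun ε : ℝ => 2 * ε ^ 2 * M) 0).eventually_lt continuousAt_const
      (by norm_num)
  filter_upwards [self_mem_nhdsWithin, nhdsWithin_le_nhds h₁, nhdsWithin_le_nhds h₂,
    nhdsWithin_le_nhds h₃] with ε h₀ h₁ h₂ h₃
  exact ⟨h₀, h₁, h₂, h₃⟩

theorem stmt_16_general (p : ℝ) (hp : 1 < p)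
    (φ : ℝ → ℝ) (hφreg : ContDiff ℝ 2 φ)
    (hrange : ∀ ζ : ℝ, 0 < φ ζ ∧ φ ζ < 1)
    (hode : ∀ ζ : ℝ, deriv (deriv φ) ζ
        + (Real.exp (2 * ζ) / 2 - (p + 3) / (p - 1)) * deriv φ ζ
        + (2 * (p + 1) / (p - 1) ^ 2) * φ ζ * (1 - (φ ζ) ^ (p - 1)) = 0) :
    ∃ ε : ℝ, ε ∈ Ioo (0 : ℝ) 1 ∧ ∀ z : ℝ, 0 ≤ 1 - φ z + ε * deriv φ z := by
  have hk : 0 ≤ 2 * (p + 1) / (p - 1) ^ 2 := div_nonneg (by linarith) (sq_nonneg _)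
  obtain ⟨ε, hε₀, hε₁, hεc, hεk⟩ := (eventually_lt_one_and_mul_lt_half_and_sq_mul_lt_one
    ((p + 3) / (p - 1)) (2 * (p + 1) / (p - 1) ^ 2 * max 1 (p - 1))).exists
  refine ⟨ε, ⟨hε₀, hε₁⟩, fun z => ?_⟩
  by_contra! hz
  set J : ℝ → ℝ := fun ζ => 1 - φ ζ + ε * deriv φ ζ
  have hJ : ∀ x, HasDerivAt J (-deriv φ x + ε * deriv (deriv φ) x) x := fun x =>
    ((hφreg.differentiable two_ne_zero x).hasDerivAt.const_sub 1).add
      ((hφreg.differentiable_deriv_two x).hasDerivAt.const_mul ε)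
  have hray : ∀ x ≤ z, J x ≤ J z := fun x =>
    le_of_le_of_deriv_pos_at_level (b := z) hJ le_rfl fun y hy =>
      neg_add_mul_pos_of_profile_eq (by positivity) hk hε₀ hεc hεk (hrange y) (hode y)
        (hy.trans_lt hz)
  obtain ⟨x, hxz, hx⟩ := exists_neg_lt_deriv_of_mem_Ioo (hφreg.differentiable two_ne_zero)
    hrange (div_pos (neg_pos.mpr hz) hε₀) z
  rw [neg_div, neg_neg, div_lt_iff₀' hε₀] at hx
  linarith [hray x hxz.le, (hrange x).2]

/-- for the self-similar profile `φ` (a strictly decreasing `C²` solution of the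
profile ODE with values in `(0,1)` and limits 1 at `−∞`, 0 at `+∞`), there exists
`ε ∈ (0,1)` such that `1 − φ(z) + ε φ'(z) ≥ 0` for all `z`. -/
theorem stmt_16 (p : ℝ) (hp : 1 < p)
    (φ : ℝ → ℝ) (hφreg : ContDiff ℝ 2 φ) (hdec : StrictAnti φ)
    (hrange : ∀ ζ : ℝ, 0 < φ ζ ∧ φ ζ < 1)
    (hode : ∀ ζ : ℝ, deriv (deriv φ) ζ
        + (Real.exp (2 * ζ) / 2 - (p + 3) / (p - 1)) * deriv φ ζ
        + (2 * (p + 1) / (p - 1) ^ 2) * φ ζ * (1 - (φ ζ) ^ (p - 1)) = 0)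
    (hlim₁ : Tendsto φ atBot (nhds 1)) (hlim₀ : Tendsto φ atTop (nhds 0)) :
    ∃ ε : ℝ, ε ∈ Ioo (0 : ℝ) 1 ∧ ∀ z : ℝ, 0 ≤ 1 - φ z + ε * deriv φ z :=
  stmt_16_general p hp φ hφreg hrange hode
end

section
/- Let p > 1 and let φ : ℝ → ℝ be a twice continuously differentiable, strictly decreasing function with 0 < φ < 1, satisfying φ''(ζ) + (e^{2ζ}/2 − (p+3)/(p−1)) φ'(ζ) + (2(p+1)/(p−1)²) φ(ζ)(1 − φ(ζ)^{p−1}) = 0 on ℝ, and such that (1 − φ(ζ)) · exp(−2(p+1)ζ/(p−1)) converges to a finite positive limit as ζ → −∞. Then e^{−ζ} φ'(ζ) → 0 as ζ → −∞. -/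
/-!
On `ζ ≤ 0` the coefficient `e^{2ζ}/2 − (p+3)/(p−1)` is negative, so the profile equation makes
`φ'' ≤ 0` there: `φ` is concave on `(-∞, 0]`. Concavity bounds the derivative below by a
difference quotient, `φ(ζ+1) − φ(ζ) ≤ φ'(ζ) ≤ 0`, and the assumed asymptotics give
`1 − φ(ζ) = O(e^{2(p+1)ζ/(p−1)}) = o(e^{ζ})`, which squeezes `e^{−ζ} φ'(ζ)` to `0`.
-/

open Real Set Filter Topology

lemma tendsto_exp_neg_mul_atBot_of_tendsto_mul_exp {g : ℝ → ℝ} {a L : ℝ} (ha : 1 < a)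
    (hg : Tendsto (fun x => g x * exp (-a * x)) atBot (𝓝 L)) :
    Tendsto (fun x => exp (-x) * g x) atBot (𝓝 0) := by
  have hexp : Tendsto (fun x => exp ((a - 1) * x)) atBot (𝓝 0) :=
    tendsto_exp_atBot.comp ((tendsto_const_mul_atBot_of_pos (by linarith)).2 tendsto_id)
  refine (mul_zero L ▸ hg.mul hexp).congr fun x => ?_
  rw [mul_assoc, ← exp_add, show -a * x + (a - 1) * x = -x by ring, mul_comm]

lemma tendsto_exp_neg_mul_deriv_atBot_of_concaveOn {f : ℝ → ℝ} {a : ℝ}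
    (hf : Differentiable ℝ f) (hanti : Antitone f) (hconc : ConcaveOn ℝ (Iic a) f)
    (hlim : Tendsto (fun x => exp (-x) * (1 - f x)) atBot (𝓝 0)) :
    Tendsto (fun x => exp (-x) * deriv f x) atBot (𝓝 0) := by
  set h := fun x => exp (-x) * (1 - f x)
  have hlower : Tendsto (fun x => h x - exp 1 * h (x + 1)) atBot (𝓝 0) := by
    simpa using hlim.sub ((hlim.comp (tendsto_atBot_add_const_right _ 1 tendsto_id)).const_mul _)
  refine tendsto_of_tendsto_of_tendsto_of_le_of_le' hlower tendsto_const_nhds ?_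
    (Eventually.of_forall fun x => mul_nonpos_of_nonneg_of_nonpos (exp_nonneg _)
      hanti.deriv_nonpos)
  filter_upwards [eventually_le_atBot (a - 1)] with x hx
  have hslope : f (x + 1) - f x ≤ deriv f x := by
    simpa [slope_def_field] using
      hconc.slope_le_deriv (mem_Iic.2 (by linarith)) (mem_Iic.2 (by linarith)) (lt_add_one x) (hf x)
  calc h x - exp 1 * h (x + 1) = exp (-x) * (f (x + 1) - f x) := by
        simp only [h, ← mul_assoc, ← exp_add]; ring_nf
    _ ≤ exp (-x) * deriv f x := mul_le_mul_of_nonneg_left hslope (exp_nonneg _)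

lemma deriv_deriv_nonpos_of_profile_ode {p : ℝ} (hp : 1 < p) {φ : ℝ → ℝ} {ζ : ℝ} (hζ : ζ ≤ 0)
    (hφ' : deriv φ ζ ≤ 0) (hφ0 : 0 ≤ φ ζ) (hφ1 : φ ζ ≤ 1)
    (hode : deriv (deriv φ) ζ
        + (exp (2 * ζ) / 2 - (p + 3) / (p - 1)) * deriv φ ζ
        + (2 * (p + 1) / (p - 1) ^ 2) * φ ζ * (1 - (φ ζ) ^ (p - 1)) = 0) :
    deriv (deriv φ) ζ ≤ 0 := by
  have hp1 : 0 < p - 1 := by linarith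
  have hdrift : exp (2 * ζ) / 2 - (p + 3) / (p - 1) ≤ 0 := by
    have : 1 ≤ (p + 3) / (p - 1) := by rw [le_div_iff₀ hp1]; linarith
    have : exp (2 * ζ) ≤ 1 := exp_le_one_iff.2 (by linarith)
    linarith
  have hreaction : 0 ≤ (2 * (p + 1) / (p - 1) ^ 2) * φ ζ * (1 - (φ ζ) ^ (p - 1)) :=
    mul_nonneg (mul_nonneg (by positivity) hφ0) (sub_nonneg.2 (rpow_le_one hφ0 hφ1 hp1.le))
  nlinarith [mul_nonneg_of_nonpos_of_nonpos hdrift hφ']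

theorem stmt_17_general (p : ℝ) (hp : 1 < p)
    (φ : ℝ → ℝ) (hφreg : ContDiff ℝ 2 φ) (hdec : StrictAnti φ)
    (hrange : ∀ ζ : ℝ, 0 < φ ζ ∧ φ ζ < 1)
    (hode : ∀ ζ : ℝ, deriv (deriv φ) ζ
        + (Real.exp (2 * ζ) / 2 - (p + 3) / (p - 1)) * deriv φ ζ
        + (2 * (p + 1) / (p - 1) ^ 2) * φ ζ * (1 - (φ ζ) ^ (p - 1)) = 0)
    (L : ℝ)
    (hasymp : Tendsto (fun ζ => (1 - φ ζ) * Real.exp (-2 * (p + 1) * ζ / (p - 1)))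
      atBot (nhds L)) :
    Tendsto (fun ζ => Real.exp (-ζ) * deriv φ ζ) atBot (nhds 0) := by
  have hdiff : Differentiable ℝ φ := hφreg.differentiable (by norm_num)
  have hconc : ConcaveOn ℝ (Iic 0) φ :=
    concaveOn_of_deriv2_nonpos' (convex_Iic 0) hdiff.differentiableOn
      hφreg.differentiable_deriv_two.differentiableOn fun ζ hζ => by
        simpa using deriv_deriv_nonpos_of_profile_ode hp hζ hdec.antitone.deriv_nonpos
          (hrange ζ).1.le (hrange ζ).2.le (hode ζ)
  have hexponent : 1 < 2 * (p + 1) / (p - 1) := by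
    rw [lt_div_iff₀ (by linarith)]; linarith
  refine tendsto_exp_neg_mul_deriv_atBot_of_concaveOn hdiff hdec.antitone hconc
    (tendsto_exp_neg_mul_atBot_of_tendsto_mul_exp hexponent (hasymp.congr fun ζ => ?_))
  ring_nf

/-- if the self-similar profile `φ` satisfies
`(1 − φ(ζ)) exp(−2(p+1)ζ/(p−1)) → L ∈ (0,∞)` as `ζ → −∞`, then
`e^{−ζ} φ'(ζ) → 0` as `ζ → −∞`. -/
theorem stmt_17 (p : ℝ) (hp : 1 < p)
    (φ : ℝ → ℝ) (hφreg : ContDiff ℝ 2 φ) (hdec : StrictAnti φ)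
    (hrange : ∀ ζ : ℝ, 0 < φ ζ ∧ φ ζ < 1)
    (hode : ∀ ζ : ℝ, deriv (deriv φ) ζ
        + (Real.exp (2 * ζ) / 2 - (p + 3) / (p - 1)) * deriv φ ζ
        + (2 * (p + 1) / (p - 1) ^ 2) * φ ζ * (1 - (φ ζ) ^ (p - 1)) = 0)
    (L : ℝ) (hL : 0 < L)
    (hasymp : Tendsto (fun ζ => (1 - φ ζ) * Real.exp (-2 * (p + 1) * ζ / (p - 1)))
      atBot (nhds L)) :
    Tendsto (fun ζ => Real.exp (-ζ) * deriv φ ζ) atBot (nhds 0) :=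
  stmt_17_general p hp φ hφreg hdec hrange hode L hasymp
end
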